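/- arXiv:math/0606454 — 4 statements merged into one kernel-verified Lean document; each statement's English description precedes it below -/
import Mathlib

section
/- Let β > 0 and λ > 0. The linear operator T̂ on the Hilbert space L²(μ̂) defined by (T̂g)(x) = (x/β)·∫ y·g(y) dμ̂(y) is a bounded linear operator whose operator norm equals F(β,λ) = (2/λ)(1−e^{−λβ}) − β e^{−λβ}. -/
open Real MeasureTheory

/-- The measure `μ̂` on `ℝ`: the point mass `(λβ+1)e^{−λβ}` at `β` plus the measure with
density `x ↦ βλ²e^{−λx}` on `(0,β)` with respect to Lebesgue measure. -/
noncomputable def muhat (β lam : ℝ) : Measure ℝ :=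
  (ENNReal.ofReal ((lam * β + 1) * exp (-(lam * β)))) • Measure.dirac β
    + (volume.restrict (Set.Ioo 0 β)).withDensity
        (fun x => ENNReal.ofReal (β * lam ^ 2 * exp (-(lam * x))))

/-!
`T̂` is the rank-one operator `g ↦ β⁻¹ ⟪φ, g⟫ φ` with `φ(x) = x`, so `‖T̂‖ = ‖φ‖² / β`.
Since `μ̂` lives on `[0, β]`, `φ ∈ L²(μ̂)` and
`‖φ‖² = (λβ+1)e^{−λβ} β² + βλ² ∫₀^β x² e^{−λx} dx = β F(β,λ)`.
-/

open InnerProductSpace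
open scoped ENNReal

lemma MeasureTheory.L2.real_inner_def {α : Type*} [MeasurableSpace α] {μ : Measure α}
    (f g : Lp ℝ 2 μ) : inner ℝ f g = ∫ x, f x * g x ∂μ := by
  simp_rw [L2.inner_def, real_inner_eq_re_inner, RCLike.inner_apply, conj_trivial,
    RCLike.re_to_real, mul_comm]

lemma integral_sq_mul_exp_neg_mul {lam : ℝ} (hlam : lam ≠ 0) (b : ℝ) :
    ∫ x in 0..b, x ^ 2 * exp (-(lam * x))
      = 2 / lam ^ 3 - exp (-(lam * b)) * (b ^ 2 / lam + 2 * b / lam ^ 2 + 2 / lam ^ 3) := by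
  have hderiv (x : ℝ) : HasDerivAt
      (fun x => -(exp (-(lam * x)) * (x ^ 2 / lam + 2 * x / lam ^ 2 + 2 / lam ^ 3)))
      (x ^ 2 * exp (-(lam * x))) x := by
    have := (((hasDerivAt_id x).const_mul lam).neg.exp.mul
      ((((hasDerivAt_pow 2 x).div_const lam).add
        (((hasDerivAt_id x).const_mul 2).div_const (lam ^ 2))).add_const (2 / lam ^ 3))).neg
    refine this.congr_deriv ?_
    simp only [Pi.add_apply, Pi.neg_apply, id]
    field_simp
    ring
  rw [intervalIntegral.integral_eq_sub_of_hasDerivAt (fun x _ => hderiv x)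
    ((by fun_prop : Continuous fun x => x ^ 2 * exp (-(lam * x))).intervalIntegrable 0 b)]
  simp only [mul_zero, neg_zero, exp_zero, one_mul, ne_eq, OfNat.ofNat_ne_zero,
    not_false_eq_true, zero_pow, zero_div, add_zero, zero_add]
  ring

instance isFiniteMeasure_muhat (β lam : ℝ) : IsFiniteMeasure (muhat β lam) := by
  have : IsFiniteMeasure ((volume.restrict (Set.Ioo 0 β)).withDensity
      fun x => ENNReal.ofReal (β * lam ^ 2 * exp (-(lam * x)))) :=
    isFiniteMeasure_withDensity_ofReal
      ((by fun_prop : Continuous fun x => β * lam ^ 2 * exp (-(lam * x))).integrableOn_Icc.mono_set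
        Set.Ioo_subset_Icc_self).hasFiniteIntegral
  have := (Measure.dirac β).smul_finite
    (ENNReal.ofReal_ne_top (r := (lam * β + 1) * exp (-(lam * β))))
  unfold muhat
  infer_instance

lemma ae_muhat_mem_Icc {β : ℝ} (lam : ℝ) (hβ : 0 ≤ β) : ∀ᵐ x ∂muhat β lam, x ∈ Set.Icc 0 β := by
  rw [muhat, ae_add_measure_iff]
  constructor
  · exact Measure.ae_smul_measure ((ae_dirac_iff measurableSet_Icc).2 ⟨hβ, le_rfl⟩) _
  · exact withDensity_absolutelyContinuous _ _ |>.ae_le <|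
      (ae_restrict_mem measurableSet_Ioo).mono fun x hx => Set.Ioo_subset_Icc_self hx

lemma memLp_id_muhat {β : ℝ} (lam : ℝ) (hβ : 0 ≤ β) (p : ℝ≥0∞) : MemLp id p (muhat β lam) :=
  .of_bound aestronglyMeasurable_id β <| (ae_muhat_mem_Icc lam hβ).mono fun x hx => by
    simpa [abs_of_nonneg hx.1] using hx.2

lemma integral_muhat {β lam : ℝ} (hβ : 0 ≤ β) (hlam : 0 ≤ lam) {f : ℝ → ℝ}
    (hf : Integrable f (muhat β lam)) :
    ∫ x, f x ∂muhat β lam = (lam * β + 1) * exp (-(lam * β)) * f β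
      + ∫ x in 0..β, β * lam ^ 2 * exp (-(lam * x)) * f x := by
  rw [muhat] at hf ⊢
  rw [integral_add_measure (hf.mono_measure (Measure.le_add_right le_rfl))
      (hf.mono_measure (Measure.le_add_left le_rfl)),
    integral_smul_measure, integral_dirac, ENNReal.toReal_ofReal (by positivity), smul_eq_mul,
    integral_withDensity_eq_integral_toReal_smul (by fun_prop)
      (ae_of_all _ fun _ => ENNReal.ofReal_lt_top),
    intervalIntegral.integral_of_le hβ, integral_Ioc_eq_integral_Ioo]
  congr 1
  refine integral_congr_ae (ae_of_all _ fun x => ?_)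
  simp only [ENNReal.toReal_ofReal (by positivity : 0 ≤ β * lam ^ 2 * exp (-(lam * x))),
    smul_eq_mul]

lemma integral_sq_muhat {β lam : ℝ} (hβ : 0 ≤ β) (hlam : 0 < lam) :
    ∫ x, x ^ 2 ∂muhat β lam = β * (2 / lam * (1 - exp (-(lam * β))) - β * exp (-(lam * β))) := by
  rw [integral_muhat hβ hlam.le (by simpa using (memLp_id_muhat lam hβ 2).integrable_sq)]
  simp_rw [mul_assoc (β * lam ^ 2), intervalIntegral.integral_const_mul, mul_comm (exp _) (_ ^ 2),
    integral_sq_mul_exp_neg_mul hlam.ne']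
  field_simp
  ring

/-- For `β > 0` and `λ > 0`, the linear operator `T̂` on `L²(μ̂)` defined by
`(T̂g)(x) = (x/β)·∫ y·g(y) dμ̂(y)` is a bounded linear operator whose operator norm equals
`F(β,λ) = (2/λ)(1−e^{−λβ}) − β e^{−λβ}`. -/
theorem stmt_4 (β lam : ℝ) (hβ : 0 < β) (hlam : 0 < lam) :
    ∃ T : Lp ℝ 2 (muhat β lam) →L[ℝ] Lp ℝ 2 (muhat β lam),
      (∀ g : Lp ℝ 2 (muhat β lam),
        (T g : ℝ → ℝ) =ᵐ[muhat β lam]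
          fun x => (x / β) * ∫ y, y * (g : ℝ → ℝ) y ∂(muhat β lam)) ∧
      ‖T‖ = 2 / lam * (1 - exp (-(lam * β))) - β * exp (-(lam * β)) := by
  obtain ⟨φ, hφ⟩ : ∃ φ : Lp ℝ 2 (muhat β lam), (φ : ℝ → ℝ) =ᵐ[muhat β lam] id :=
    ⟨_, (memLp_id_muhat lam hβ.le 2).coeFn_toLp⟩
  have hinner (g : Lp ℝ 2 (muhat β lam)) : inner ℝ φ g = ∫ y, y * g y ∂muhat β lam :=
    (L2.real_inner_def φ g).trans <| integral_congr_ae <| hφ.mono fun x hx => by simp [hx]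
  refine ⟨rankOne ℝ (β⁻¹ • φ) φ, fun g => ?_, ?_⟩
  · filter_upwards [Lp.coeFn_smul (inner ℝ φ g) (β⁻¹ • φ), Lp.coeFn_smul β⁻¹ φ, hφ]
      with x hTx hφx hx
    rw [rankOne_apply, hTx]
    simp only [Pi.smul_apply, hφx, hx, hinner, id, smul_eq_mul]
    ring
  · have hnorm : ‖φ‖ ^ 2 = β * (2 / lam * (1 - exp (-(lam * β))) - β * exp (-(lam * β))) := by
      rw [← real_inner_self_eq_norm_sq, hinner, ← integral_sq_muhat hβ.le hlam]
      exact integral_congr_ae (hφ.mono fun x hx => by simp [hx, sq])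
    rw [norm_rankOne, norm_smul, Real.norm_of_nonneg (inv_nonneg.2 hβ.le), mul_assoc, ← sq, hnorm]
    field_simp
end

section
/- Let β > 0 and λ > 0. The function γ ↦ G(γ) is strictly decreasing on [0,∞), and G(γ) → 0 as γ → ∞. -/
/-!
Writing `t = λ + γ`, `G(γ)` is the integral `∫₀^β (1 + λs) e^{-ts} ds`, whose integrand is
positive and strictly decreasing in `t` for `s > 0`; hence `G` is strictly decreasing. The integral is
nonnegative, and dropping the exponential terms of `G` bounds it by `(λ + t)/t²`, so `G(γ) → 0`.
-/

open Real Filter Topology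

theorem integral_one_add_mul_mul_exp_neg_mul (a β : ℝ) {t : ℝ} (ht : t ≠ 0) :
    ∫ s in (0 : ℝ)..β, (1 + a * s) * exp (-(t * s))
      = (a + t) / t ^ 2 * (1 - exp (-(t * β))) - a * β / t * exp (-(t * β)) := by
  have hprimitive : ∀ s : ℝ,
      HasDerivAt (fun s => -((1 + a * s) / t + a / t ^ 2) * exp (-(t * s)))
        ((1 + a * s) * exp (-(t * s))) s := by
    intro s
    have hpoly : HasDerivAt (fun s : ℝ => -((1 + a * s) / t + a / t ^ 2)) (-(a / t)) s := by
      simpa [Pi.neg_def] using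
        (((((hasDerivAt_id s).const_mul a).const_add 1).div_const t).add_const (a / t ^ 2)).neg
    have hexp : HasDerivAt (fun s : ℝ => exp (-(t * s))) (-t * exp (-(t * s))) s := by
      simpa [mul_comm] using ((hasDerivAt_id s).const_mul t).neg.exp
    refine (hpoly.mul hexp).congr_deriv ?_
    field_simp
    ring
  rw [intervalIntegral.integral_eq_sub_of_hasDerivAt (fun s _ => hprimitive s)
    (by apply Continuous.intervalIntegrable; fun_prop)]
  field_simp
  simp only [mul_zero, neg_zero, exp_zero]
  ring

section

variable {a β : ℝ}

theorem strictAnti_integral_one_add_mul_mul_exp_neg_mul (ha : 0 ≤ a) (hβ : 0 < β) :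
    StrictAnti fun t : ℝ => ∫ s in (0 : ℝ)..β, (1 + a * s) * exp (-(t * s)) := by
  intro t₁ t₂ ht
  apply intervalIntegral.integral_lt_integral_of_continuousOn_of_le_of_exists_lt hβ
    (by fun_prop) (by fun_prop)
  · intro s hs
    gcongr
    · exact add_nonneg zero_le_one (mul_nonneg ha hs.1.le)
    · exact hs.1.le
  · refine ⟨β, ⟨hβ.le, le_rfl⟩, ?_⟩
    gcongr

theorem tendsto_integral_one_add_mul_mul_exp_neg_mul_atTop (ha : 0 ≤ a) (hβ : 0 ≤ β) :
    Tendsto (fun t : ℝ => ∫ s in (0 : ℝ)..β, (1 + a * s) * exp (-(t * s))) atTop (𝓝 0) := by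
  have hbound : Tendsto (fun t : ℝ => a * t⁻¹ ^ 2 + t⁻¹) atTop (𝓝 0) := by
    simpa using (tendsto_inv_atTop_zero.pow 2).const_mul a |>.add tendsto_inv_atTop_zero
  refine tendsto_of_tendsto_of_tendsto_of_le_of_le' tendsto_const_nhds hbound ?_ ?_
  · filter_upwards with t
    exact intervalIntegral.integral_nonneg hβ fun s hs => by
      have := hs.1
      positivity
  · filter_upwards [eventually_gt_atTop 0] with t ht
    rw [integral_one_add_mul_mul_exp_neg_mul a β ht.ne']
    have hclosed : a * t⁻¹ ^ 2 + t⁻¹ = (a + t) / t ^ 2 := by field_simp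
    rw [hclosed]
    have : 0 ≤ (a + t) / t ^ 2 * exp (-(t * β)) + a * β / t * exp (-(t * β)) := by positivity
    linarith

end

/-- For `β > 0` and `λ > 0`, the function
`γ ↦ G(γ) = ((2λ+γ)/(λ+γ)²)·(1−e^{−(λ+γ)β}) − (λβ/(λ+γ))·e^{−(λ+γ)β}`
is strictly decreasing on `[0,∞)` and tends to `0` as `γ → ∞`. -/
theorem stmt_6 (β lam : ℝ) (hβ : 0 < β) (hlam : 0 < lam)
    (G : ℝ → ℝ)
    (hG : ∀ γ : ℝ, G γ = (2 * lam + γ) / (lam + γ) ^ 2 * (1 - exp (-((lam + γ) * β)))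
      - lam * β / (lam + γ) * exp (-((lam + γ) * β))) :
    StrictAntiOn G (Set.Ici 0) ∧ Tendsto G atTop (nhds 0) := by
  let F : ℝ → ℝ := fun t => ∫ s in (0 : ℝ)..β, (1 + lam * s) * exp (-(t * s))
  have hFG : Set.EqOn (fun γ => F (lam + γ)) G (Set.Ici 0) := fun γ hγ => by
    have ht : lam + γ ≠ 0 := by linarith [Set.mem_Ici.mp hγ]
    simp only [F, integral_one_add_mul_mul_exp_neg_mul lam β ht, hG γ]
    ring
  constructor
  · exact ((strictAnti_integral_one_add_mul_mul_exp_neg_mul hlam.le hβ).comp_strictMono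
      (strictMono_id.const_add lam)).strictAntiOn _ |>.congr hFG
  · exact ((tendsto_integral_one_add_mul_mul_exp_neg_mul_atTop hlam.le hβ.le).comp
      (tendsto_atTop_add_const_left _ lam tendsto_id)).congr'
      ((eventually_ge_atTop 0).mono hFG)
end

section
/- Let β > 0 and λ > 0. If F(β,λ) ≤ 1 then there is no γ > 0 with G(γ) = 1, while if F(β,λ) > 1 then there exists exactly one γ > 0 with G(γ) = 1. -/
open Real Set

/-!
Both `F` and `G` are values of the truncated Laplace transform
`L(μ) = ∫₀^β (1 + λt) e^{-μt} dt`: `F = L(λ)` and `G(γ) = L(λ + γ)` for `γ ≥ 0`.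
The integrand is positive, so `L` is continuous and strictly decreasing; hence `G(γ) < F`
for `γ > 0`, which settles the case `F ≤ 1`. If `F > 1`, the bound `L(μ) < (λ + μ)/μ²`
gives `G(1) < (2λ + 1)/(λ + 1)² < 1`, and the intermediate value theorem together with strict
monotonicity yields exactly one root.
-/

noncomputable def truncLaplace (a β μ : ℝ) : ℝ :=
  ∫ t in (0:ℝ)..β, (1 + a * t) * exp (-(μ * t))

theorem truncLaplace_eq (a β : ℝ) {μ : ℝ} (hμ : μ ≠ 0) :
    truncLaplace a β μ
      = (a + μ) / μ ^ 2 * (1 - exp (-(μ * β))) - a * β / μ * exp (-(μ * β)) := by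
  have hprim : ∀ t ∈ uIcc (0:ℝ) β,
      HasDerivAt (fun t => -((1 + a * t) / μ + a / μ ^ 2) * exp (-(μ * t)))
        ((1 + a * t) * exp (-(μ * t))) t := by
    intro t _
    have hlin : HasDerivAt (fun t : ℝ => -((1 + a * t) / μ + a / μ ^ 2)) (-(a / μ)) t :=
      ((((((hasDerivAt_id t).const_mul a).const_add 1).div_const μ).add_const
        (a / μ ^ 2)).neg).congr_deriv (by ring)
    have hexp : HasDerivAt (fun t : ℝ => exp (-(μ * t))) (exp (-(μ * t)) * -μ) t := by
      simpa using (((hasDerivAt_id t).const_mul μ).neg).exp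
    refine (hlin.mul hexp).congr_deriv ?_
    field_simp
    ring
  rw [truncLaplace, intervalIntegral.integral_eq_sub_of_hasDerivAt hprim
    (by apply Continuous.intervalIntegrable; fun_prop)]
  field_simp
  simp only [mul_zero, neg_zero, exp_zero]
  ring

theorem continuous_truncLaplace (a β : ℝ) : Continuous (truncLaplace a β) := by
  unfold truncLaplace
  fun_prop

theorem truncLaplace_strictAnti {a β : ℝ} (ha : 0 ≤ a) (hβ : 0 < β) :
    StrictAnti (truncLaplace a β) := by
  intro μ ν hμν
  have hpos : ∀ t ∈ Icc (0:ℝ) β, 0 < 1 + a * t := fun t ht => by nlinarith [ht.1]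
  apply intervalIntegral.integral_lt_integral_of_continuousOn_of_le_of_exists_lt hβ
    (by fun_prop) (by fun_prop)
  · intro t ht
    gcongr
    · exact (hpos t (Ioc_subset_Icc_self ht)).le
    · exact ht.1.le
  · refine ⟨β, right_mem_Icc.2 hβ.le, ?_⟩
    gcongr

theorem truncLaplace_lt {a β μ : ℝ} (ha : 0 ≤ a) (hβ : 0 < β) (hμ : 0 < μ) :
    truncLaplace a β μ < (a + μ) / μ ^ 2 := by
  rw [truncLaplace_eq a β hμ.ne']
  have hexp : 0 < exp (-(μ * β)) := exp_pos _
  have : 0 < (a + μ) / μ ^ 2 := by positivity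
  have : 0 ≤ a * β / μ * exp (-(μ * β)) := by positivity
  nlinarith

theorem StrictAnti.existsUnique_gt_eq {f : ℝ → ℝ} (hf : StrictAnti f) (hfc : Continuous f)
    {c d y : ℝ} (hcd : c ≤ d) (hd : f d < y) (hc : y < f c) :
    ∃! x, c < x ∧ f x = y := by
  obtain ⟨x, hx, hfx⟩ := intermediate_value_Ioo' hcd hfc.continuousOn ⟨hd, hc⟩
  exact ⟨x, ⟨hx.1, hfx⟩, fun x' hx' => hf.injective (hx'.2.trans hfx.symm)⟩

/-- For `β > 0` and `λ > 0`, with `F(β,λ) = (2/λ)(1−e^{−λβ}) − β e^{−λβ}` and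
`G(γ) = ((2λ+γ)/(λ+γ)²)·(1−e^{−(λ+γ)β}) − (λβ/(λ+γ))·e^{−(λ+γ)β}`:
if `F(β,λ) ≤ 1` then there is no `γ > 0` with `G(γ) = 1`, while if `F(β,λ) > 1`
then there is exactly one `γ > 0` with `G(γ) = 1`. -/
theorem stmt_7 (β lam : ℝ) (hβ : 0 < β) (hlam : 0 < lam)
    (F : ℝ) (hF : F = 2 / lam * (1 - exp (-(lam * β))) - β * exp (-(lam * β)))
    (G : ℝ → ℝ)
    (hG : ∀ γ : ℝ, G γ = (2 * lam + γ) / (lam + γ) ^ 2 * (1 - exp (-((lam + γ) * β)))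
      - lam * β / (lam + γ) * exp (-((lam + γ) * β))) :
    (F ≤ 1 → ¬ ∃ γ : ℝ, 0 < γ ∧ G γ = 1) ∧
    (1 < F → ∃! γ : ℝ, 0 < γ ∧ G γ = 1) := by
  have hL : StrictAnti fun γ => truncLaplace lam β (lam + γ) :=
    (truncLaplace_strictAnti hlam.le hβ).comp_strictMono (strictMono_id.const_add lam)
  have hGL (γ : ℝ) (hγ : 0 ≤ γ) : G γ = truncLaplace lam β (lam + γ) := by
    rw [hG, truncLaplace_eq _ _ (by positivity), ← add_assoc, ← two_mul]
  have hFL : F = truncLaplace lam β (lam + 0) := by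
    rw [hF, add_zero, truncLaplace_eq _ _ hlam.ne']
    field_simp
    ring
  have hL1 : truncLaplace lam β (lam + 1) < 1 :=
    (truncLaplace_lt hlam.le hβ (by positivity)).trans_le <| by
      rw [div_le_one (by positivity)]
      nlinarith
  constructor
  · rintro hF1 ⟨γ, hγ, hGγ⟩
    have := hL hγ
    simp only [← hGL γ hγ.le, ← hFL, hGγ] at this
    linarith
  · intro hF1
    obtain ⟨γ, ⟨hγ, hLγ⟩, huniq⟩ := hL.existsUnique_gt_eq
      ((continuous_truncLaplace lam β).comp (continuous_const_add lam)) zero_le_one hL1 (hFL ▸ hF1)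
    refine ⟨γ, ⟨hγ, hGL γ hγ.le ▸ hLγ⟩, fun γ' hγ' => huniq γ' ⟨hγ'.1, ?_⟩⟩
    rw [← hGL γ' hγ'.1.le, hγ'.2]
end

section
/- Let β > 0, λ > 0, and γ ≥ 0. Then ∫ (1 − e^{−γx}) dμ̂(x) = (γλβ/(λ+γ))·(1 − e^{−(λ+γ)β}) + e^{−λβ}·(1 − e^{−γβ}). -/
open Real MeasureTheory

/-!
The absolutely continuous part contributes the elementary integral
`βλ² ∫₀^β e^{-λx}(1 - e^{-γx}) dx = βλ(1 - e^{-λβ}) - βλ²(1 - e^{-(λ+γ)β})/(λ+γ)`,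
and the atom contributes `(λβ+1)e^{-λβ}(1 - e^{-γβ})`. Writing `λ² = λ(λ+γ) - λγ`, the
`λβ e^{-λβ}(1 - e^{-γβ})` part of the atom cancels against the absolutely continuous part,
leaving the stated formula.
-/

lemma integral_exp_neg_mul {c : ℝ} (hc : c ≠ 0) (b : ℝ) :
    ∫ x in (0 : ℝ)..b, exp (-(c * x)) = (1 - exp (-(c * b))) / c := by
  simp only [← neg_mul]
  rw [intervalIntegral.integral_comp_mul_left exp (neg_ne_zero.2 hc), integral_exp, mul_zero,
    exp_zero, smul_eq_mul]
  field_simp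
  ring

lemma integral_exp_neg_mul_one_sub_exp_neg_mul {lam γ : ℝ} (hlam : lam ≠ 0)
    (hlamγ : lam + γ ≠ 0) (b : ℝ) :
    ∫ x in (0 : ℝ)..b, exp (-(lam * x)) * (1 - exp (-(γ * x)))
      = (1 - exp (-(lam * b))) / lam - (1 - exp (-((lam + γ) * b))) / (lam + γ) := by
  have hsplit : ∀ x, exp (-(lam * x)) * (1 - exp (-(γ * x)))
      = exp (-(lam * x)) - exp (-((lam + γ) * x)) := fun x => by
    rw [show -((lam + γ) * x) = -(lam * x) + -(γ * x) by ring, exp_add]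
    ring
  simp only [hsplit]
  rw [intervalIntegral.integral_sub
    (Continuous.intervalIntegrable (by fun_prop) _ _)
    (Continuous.intervalIntegrable (by fun_prop) _ _), integral_exp_neg_mul hlam,
    integral_exp_neg_mul hlamγ]

section Density

variable {f d : ℝ → ℝ} {a b : ℝ}

lemma integrable_withDensity_Ioo (hf : Continuous f) (hd : Continuous d) :
    Integrable f ((volume.restrict (Set.Ioo a b)).withDensity fun x => ENNReal.ofReal (d x)) := by
  rw [integrable_withDensity_iff hd.measurable.ennreal_ofReal
    (ae_of_all _ fun _ => ENNReal.ofReal_lt_top)]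
  simp only [ENNReal.toReal_ofReal']
  exact ((by fun_prop : Continuous fun x => f x * max (d x) 0).integrableOn_Icc).mono_set
    Set.Ioo_subset_Icc_self

lemma integral_withDensity_Ioo (hab : a ≤ b) (hd : Measurable d)
    (hd_nonneg : ∀ x ∈ Set.Ioo a b, 0 ≤ d x) :
    ∫ x, f x ∂(volume.restrict (Set.Ioo a b)).withDensity (fun x => ENNReal.ofReal (d x))
      = ∫ x in a..b, d x * f x := by
  rw [integral_withDensity_eq_integral_toReal_smul hd.ennreal_ofReal
    (ae_of_all _ fun _ => ENNReal.ofReal_lt_top), intervalIntegral.integral_of_le hab,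
    integral_Ioc_eq_integral_Ioo]
  refine setIntegral_congr_fun measurableSet_Ioo fun x hx => ?_
  rw [ENNReal.toReal_ofReal (hd_nonneg x hx), smul_eq_mul]

end Density

/-- For `β > 0`, `λ > 0` and `γ ≥ 0`,
`∫ (1 − e^{−γx}) dμ̂(x) = (γλβ/(λ+γ))·(1 − e^{−(λ+γ)β}) + e^{−λβ}·(1 − e^{−γβ})`. -/
theorem stmt_11 (β lam γ : ℝ) (hβ : 0 < β) (hlam : 0 < lam) (hγ : 0 ≤ γ) :
    ∫ x, (1 - exp (-(γ * x))) ∂(muhat β lam)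
      = γ * lam * β / (lam + γ) * (1 - exp (-((lam + γ) * β)))
        + exp (-(lam * β)) * (1 - exp (-(γ * β))) := by
  have hlamγ : lam + γ ≠ 0 := by positivity
  have hf : Continuous fun x => 1 - exp (-(γ * x)) := by fun_prop
  have hd : Continuous fun x => β * lam ^ 2 * exp (-(lam * x)) := by fun_prop
  have hatom : Integrable (fun x => 1 - exp (-(γ * x))) (Measure.dirac β) :=
    integrable_dirac enorm_lt_top
  rw [muhat, integral_add_measure (hatom.smul_measure ENNReal.ofReal_ne_top)
      (integrable_withDensity_Ioo hf hd),
    integral_smul_measure, integral_dirac, ENNReal.toReal_ofReal (by positivity),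
    integral_withDensity_Ioo hβ.le hd.measurable fun x _ => by positivity]
  simp only [mul_assoc]
  rw [intervalIntegral.integral_const_mul, intervalIntegral.integral_const_mul,
    integral_exp_neg_mul_one_sub_exp_neg_mul hlam.ne' hlamγ,
    show -((lam + γ) * β) = -(lam * β) + -(γ * β) by ring, exp_add, smul_eq_mul]
  field_simp
  ring
end
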